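/- arXiv:2204.09219 — 6 statements merged into one kernel-verified Lean document; each statement's English description precedes it below -/
import Mathlib

section
/- Let (K_1,…,K_n) be a Cantor-type graph-directed attractor in ℝ^d. For every pair of distinct indices i, j ∈ {1,…,n}, the intersection K_i ∩ K_j is nonempty if and only if there exists, in the associated intersecting graph, either a terminated finite walk or an infinite solid walk that starts from the vertex (i,j). -/
open Set

/-- The closed unit cube `[0,1]^d` in `ℝ^d`. -/
def unitCube (d : ℕ) : Set (Fin d → ℝ) := {x | ∀ m, x m ∈ Set.Icc (0 : ℝ) 1}

/-- The contracting similarity `x ↦ N⁻¹(x + t)` on `ℝ^d`. -/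
noncomputable def cmap {d : ℕ} (N : ℕ) (t : Fin d → ℕ) (x : Fin d → ℝ) : Fin d → ℝ :=
  fun m => (x m + t m) / N

/-- The face of `[0,1]^d` determined by an index set `s` and prescribed values `a`
(`a m ∈ {0,1}` for `m ∈ s`); its dimension is `d - s.card`. -/
def face {d : ℕ} (s : Finset (Fin d)) (a : Fin d → ℝ) : Set (Fin d → ℝ) :=
  {x | x ∈ unitCube d ∧ ∀ m ∈ s, x m = a m}

/-- A Cantor-type graph-directed system: a finite directed multigraph on `Fin n`
in which every vertex has an outgoing edge, together with translation vectors
`t e ∈ {0,…,N-1}^d`; distinct parallel edges carry distinct vectors. -/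
structure CantorGDS (d N n : ℕ) where
  E : Type
  fintypeE : Fintype E
  src : E → Fin n
  dst : E → Fin n
  t : E → Fin d → ℕ
  t_lt : ∀ e m, t e m < N
  exists_out : ∀ v : Fin n, ∃ e : E, src e = v
  distinct : ∀ e e' : E, src e = src e' → dst e = dst e' → t e = t e' → e = e'

namespace CantorGDS

/-- The map `φ_e(x) = N⁻¹(x + t_e)` associated with an edge. -/
noncomputable def phi {d N n : ℕ} (S : CantorGDS d N n) (e : S.E) : (Fin d → ℝ) → (Fin d → ℝ) :=
  cmap N (S.t e)

/-- `(K 1, …, K n)` is the Cantor-type graph-directed attractor of `S`: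
an `n`-tuple of nonempty compact sets with `K i = ⋃_{j} ⋃_{e ∈ E_{i,j}} φ_e(K j)`. -/
def IsAttractor {d N n : ℕ} (S : CantorGDS d N n) (K : Fin n → Set (Fin d → ℝ)) : Prop :=
  (∀ i, (K i).Nonempty) ∧ (∀ i, IsCompact (K i)) ∧
    (∀ i, K i = ⋃ e : S.E, ⋃ _ : S.src e = i, S.phi e '' K (S.dst e))

/-- The level-`k` approximations: `Q 0 i = [0,1]^d` and
`Q (k+1) i = ⋃_{j} ⋃_{e ∈ E_{i,j}} φ_e(Q k j)`. -/
def Q {d N n : ℕ} (S : CantorGDS d N n) : ℕ → Fin n → Set (Fin d → ℝ)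
  | 0, _ => unitCube d
  | (k+1), i => ⋃ e : S.E, ⋃ _ : S.src e = i, S.phi e '' CantorGDS.Q S k (S.dst e)

/-- A solid edge from `(i,j)` to `(i',j')` in the intersecting graph:
`i ≠ j` and there are `e ∈ E_{i,i'}`, `e' ∈ E_{j,j'}` with `φ_e = φ_{e'}`. -/
def SolidEdge {d N n : ℕ} (S : CantorGDS d N n) (i j i' j' : Fin n) : Prop :=
  i ≠ j ∧ ∃ e e' : S.E, S.src e = i ∧ S.dst e = i' ∧ S.src e' = j ∧ S.dst e' = j' ∧
    S.t e = S.t e'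

/-- `e, e'` witness a dashed edge: the cubes `φ_e([0,1]^d)` and `φ_{e'}([0,1]^d)` share a
nonempty common face of dimension at most `d-1`; equivalently `t_e ≠ t_{e'}` and every
coordinate of `t_e - t_{e'}` lies in `{-1,0,1}`. -/
def DashedWitness {d N n : ℕ} (S : CantorGDS d N n) (e e' : S.E) : Prop :=
  S.t e ≠ S.t e' ∧ ∀ m, ((S.t e m : ℤ) - (S.t e' m : ℤ)).natAbs ≤ 1

/-- A terminated edge from `(i,j)` to `(i',j')` in the intersecting graph: either a solid
edge with `i' = j'`, or a dashed edge witnessed by `e, e'` with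
`φ_e(K i') ∩ φ_{e'}(K j') ≠ ∅`. -/
def TerminatedEdge {d N n : ℕ} (S : CantorGDS d N n) (K : Fin n → Set (Fin d → ℝ))
    (i j i' j' : Fin n) : Prop :=
  i ≠ j ∧ ∃ e e' : S.E, S.src e = i ∧ S.dst e = i' ∧ S.src e' = j ∧ S.dst e' = j' ∧
    ((S.t e = S.t e' ∧ i' = j') ∨
      (DashedWitness S e e' ∧ (S.phi e '' K i' ∩ S.phi e' '' K j').Nonempty))

/-- A solid walk of length `m` in the intersecting graph starting from `(i,j)`. -/
def SolidWalkOfLength {d N n : ℕ} (S : CantorGDS d N n) (m : ℕ) (i j : Fin n) : Prop :=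
  ∃ p q : ℕ → Fin n, p 0 = i ∧ q 0 = j ∧
    ∀ k < m, SolidEdge S (p k) (q k) (p (k + 1)) (q (k + 1))

/-- An infinite solid walk in the intersecting graph starting from `(i,j)`. -/
def InfSolidWalk {d N n : ℕ} (S : CantorGDS d N n) (i j : Fin n) : Prop :=
  ∃ p q : ℕ → Fin n, p 0 = i ∧ q 0 = j ∧
    ∀ k, SolidEdge S (p k) (q k) (p (k + 1)) (q (k + 1))

/-- A terminated finite walk in the intersecting graph starting from `(i,j)`: a walk of
length `m + 1` whose first `m` edges are solid and whose last edge is terminated. -/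
def TerminatedWalk {d N n : ℕ} (S : CantorGDS d N n) (K : Fin n → Set (Fin d → ℝ))
    (i j : Fin n) : Prop :=
  ∃ m : ℕ, ∃ p q : ℕ → Fin n, p 0 = i ∧ q 0 = j ∧
    (∀ k < m, SolidEdge S (p k) (q k) (p (k + 1)) (q (k + 1))) ∧
    TerminatedEdge S K (p m) (q m) (p (m + 1)) (q (m + 1))

/-- The edge relation of the graph `G_P`: there is an edge from `i` to `j` whenever
`P ∩ ⋃_{e ∈ E_{i,j}} φ_e([0,1]^d) ≠ ∅`. -/
def GPEdge {d N n : ℕ} (S : CantorGDS d N n) (P : Set (Fin d → ℝ)) (i j : Fin n) : Prop :=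
  ∃ e : S.E, S.src e = i ∧ S.dst e = j ∧ (P ∩ S.phi e '' unitCube d).Nonempty

/-- There is a walk of length `k` in the graph `G_P` starting from `i`. -/
def GPWalk {d N n : ℕ} (S : CantorGDS d N n) (P : Set (Fin d → ℝ)) (i : Fin n) (k : ℕ) :
    Prop :=
  ∃ p : ℕ → Fin n, p 0 = i ∧ ∀ l < k, GPEdge S P (p l) (p (l + 1))

/-- `l` is a walk in the directed graph of `S` starting from vertex `i`. -/
def WalkFrom {d N n : ℕ} (S : CantorGDS d N n) (i : Fin n) (l : List S.E) : Prop :=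
  (∀ e ∈ l.head?, S.src e = i) ∧ List.Chain' (fun e e' => S.dst e = S.src e') l

/-- The terminal vertex of a walk `l` starting from `i` (equal to `i` if `l` is empty). -/
def ter {d N n : ℕ} (S : CantorGDS d N n) (i : Fin n) (l : List S.E) : Fin n :=
  l.getLast?.elim i S.dst

/-- For a walk `𝐞 = (e_1, …, e_k)`, the composition `φ_𝐞 = φ_{e_1} ∘ ⋯ ∘ φ_{e_k}`. -/
noncomputable def phiWalk {d N n : ℕ} (S : CantorGDS d N n) (l : List S.E) :
    (Fin d → ℝ) → (Fin d → ℝ) :=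
  l.foldr (fun e f => S.phi e ∘ f) id

/-- For an infinite walk `e`, the composition `φ_{e 0} ∘ ⋯ ∘ φ_{e (m-1)}` of its first
`m` maps. -/
noncomputable def compWalk {d N n : ℕ} (S : CantorGDS d N n) (e : ℕ → S.E) :
    ℕ → (Fin d → ℝ) → (Fin d → ℝ)
  | 0 => id
  | (m + 1) => CantorGDS.compWalk S e m ∘ S.phi (e m)

end CantorGDS

/-- The constant `c(n,d) = (d-1)n² + (n²+n)/2 + d - 1`. -/
def cConst (n d : ℕ) : ℕ := (d - 1) * n ^ 2 + (n ^ 2 + n) / 2 + d - 1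

section Aux

open CantorGDS Filter Topology

variable {d N n : ℕ} (S : CantorGDS d N n) {K : Fin n → Set (Fin d → ℝ)}

lemma phi_image_subset (hK : S.IsAttractor K) (e : S.E) :
    S.phi e '' K (S.dst e) ⊆ K (S.src e) := by
  rw [hK.2.2 (S.src e)]
  exact Set.subset_iUnion₂ (s := fun e' (_ : S.src e' = S.src e) => S.phi e' '' K (S.dst e')) e rfl

lemma phi_eq_of_t_eq {e e' : S.E} (h : S.t e = S.t e') : S.phi e = S.phi e' := by
  unfold CantorGDS.phi; rw [h]

lemma attractor_subset_cube (hN : 2 ≤ N) (hK : S.IsAttractor K) (i : Fin n) :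
    K i ⊆ unitCube d := by
  intro x hx m
  set A := ⋃ i, K i with hA
  have hAc : IsCompact A := isCompact_iUnion fun i => hK.2.1 i
  have hxA : x ∈ A := Set.mem_iUnion.2 ⟨i, hx⟩
  have hne : A.Nonempty := ⟨x, hxA⟩
  have hstep : ∀ w ∈ A, ∃ e : S.E, ∃ y ∈ A, w = S.phi e y := by
    intro w hw
    obtain ⟨i', hi'⟩ := Set.mem_iUnion.1 hw
    rw [hK.2.2 i'] at hi'
    simp only [Set.mem_iUnion] at hi'
    obtain ⟨e, he, y, hy, hyw⟩ := hi'
    exact ⟨e, y, Set.mem_iUnion.2 ⟨_, hy⟩, hyw.symm⟩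
  have hNr : (2 : ℝ) ≤ N := by exact_mod_cast hN
  have hN0 : (0 : ℝ) < N := by linarith
  constructor
  · -- lower bound
    obtain ⟨w, hw, hmin⟩ := hAc.exists_isMinOn hne (continuous_apply m).continuousOn
    obtain ⟨e, y, hy, hwe⟩ := hstep w hw
    have h1 : w m = (y m + S.t e m) / N := by rw [hwe]; rfl
    have h2 : w m ≤ y m := hmin hy
    have h3 : (0 : ℝ) ≤ S.t e m := by positivity
    have h1' : w m * N = y m + S.t e m := by rw [h1]; field_simp
    have hw0 : 0 ≤ w m := by
      by_contra hcon
      push_neg at hcon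
      nlinarith [mul_pos (show (0:ℝ) < -w m by linarith) (show (0:ℝ) < (N:ℝ) - 1 by linarith)]
    have hwx : w m ≤ x m := hmin hxA
    linarith
  · -- upper bound
    obtain ⟨w, hw, hmax⟩ := hAc.exists_isMaxOn hne (continuous_apply m).continuousOn
    obtain ⟨e, y, hy, hwe⟩ := hstep w hw
    have h1 : w m = (y m + S.t e m) / N := by rw [hwe]; rfl
    have h2 : y m ≤ w m := hmax hy
    have h3 : (S.t e m : ℝ) ≤ N - 1 := by
      have h := S.t_lt e m
      have h' : (S.t e m : ℝ) + 1 ≤ N := by exact_mod_cast h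
      linarith
    have h1' : w m * N = y m + S.t e m := by rw [h1]; field_simp
    have hw1 : w m ≤ 1 := by
      by_contra hcon
      push_neg at hcon
      nlinarith [mul_pos (show (0:ℝ) < w m - 1 by linarith) (show (0:ℝ) < (N:ℝ) - 1 by linarith)]
    have hwx : x m ≤ w m := hmax hxA
    linarith

lemma dist_phi_le (hN : 2 ≤ N) (e : S.E) (x y : Fin d → ℝ) :
    dist (S.phi e x) (S.phi e y) ≤ dist x y / N := by
  have hN0 : (0 : ℝ) < N := by positivity
  rw [dist_pi_le_iff (by positivity)]
  intro m
  have h := dist_le_pi_dist x y m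
  simp only [CantorGDS.phi, cmap, Real.dist_eq] at *
  have he : (x m + S.t e m) / N - (y m + S.t e m) / N = (x m - y m) / N := by ring
  rw [he, abs_div, abs_of_pos hN0]
  gcongr

lemma compWalk_succ (e : ℕ → S.E) (k : ℕ) (x : Fin d → ℝ) :
    S.compWalk e (k + 1) x = S.compWalk e k (S.phi (e k) x) := rfl

lemma compWalk_mem (hK : S.IsAttractor K) (e : ℕ → S.E) (p : ℕ → Fin n)
    (hsrc : ∀ k, S.src (e k) = p k) (hdst : ∀ k, S.dst (e k) = p (k + 1)) :
    ∀ k x, x ∈ K (p k) → S.compWalk e k x ∈ K (p 0) := by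
  intro k
  induction k with
  | zero => intro x hx; exact hx
  | succ k ih =>
    intro x hx
    rw [compWalk_succ]
    apply ih
    have h1 : S.phi (e k) x ∈ S.phi (e k) '' K (S.dst (e k)) :=
      ⟨x, by rw [hdst]; exact hx, rfl⟩
    have h2 := phi_image_subset S hK (e k) h1
    rwa [hsrc] at h2

lemma compWalk_congr {e e' : ℕ → S.E} (h : ∀ k, S.phi (e k) = S.phi (e' k)) :
    ∀ k, S.compWalk e k = S.compWalk e' k := by
  intro k
  induction k with
  | zero => rfl
  | succ k ih => funext x; rw [compWalk_succ, compWalk_succ, ih, h]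

lemma compWalk_dist (hN : 2 ≤ N) (e : ℕ → S.E) (k : ℕ) :
    ∀ x y : Fin d → ℝ,
      dist (S.compWalk e k x) (S.compWalk e k y) ≤ dist x y * (1 / N) ^ k := by
  have hN0 : (0 : ℝ) < N := by positivity
  induction k with
  | zero => intro x y; simp [CantorGDS.compWalk]
  | succ k ih =>
    intro x y
    rw [compWalk_succ, compWalk_succ]
    calc dist (S.compWalk e k (S.phi (e k) x)) (S.compWalk e k (S.phi (e k) y))
        ≤ dist (S.phi (e k) x) (S.phi (e k) y) * (1 / N) ^ k := ih _ _
      _ ≤ (dist x y / N) * (1 / N) ^ k := by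
          gcongr
          exact dist_phi_le S hN (e k) x y
      _ = dist x y * (1 / N) ^ (k + 1) := by ring

lemma solid_nonempty (hK : S.IsAttractor K) {i j i' j' : Fin n}
    (hE : CantorGDS.SolidEdge S i j i' j') (h : (K i' ∩ K j').Nonempty) :
    (K i ∩ K j).Nonempty := by
  obtain ⟨x, hx1, hx2⟩ := h
  obtain ⟨-, e, e', he, hde, he', hde', ht⟩ := hE
  refine ⟨S.phi e x, ?_, ?_⟩
  · have h1 : S.phi e x ∈ S.phi e '' K (S.dst e) := ⟨x, by rw [hde]; exact hx1, rfl⟩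
    have h2 := phi_image_subset S hK e h1
    rwa [he] at h2
  · have h1 : S.phi e' x ∈ S.phi e' '' K (S.dst e') := ⟨x, by rw [hde']; exact hx2, rfl⟩
    have h2 := phi_image_subset S hK e' h1
    rw [he'] at h2
    rwa [phi_eq_of_t_eq S ht]

lemma term_nonempty (hK : S.IsAttractor K) {i j i' j' : Fin n}
    (hE : CantorGDS.TerminatedEdge S K i j i' j') : (K i ∩ K j).Nonempty := by
  obtain ⟨-, e, e', he, hde, he', hde', hor⟩ := hE
  rcases hor with ⟨ht, hij'⟩ | ⟨-, x, hx1, hx2⟩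
  · obtain ⟨x, hx⟩ := hK.1 i'
    refine ⟨S.phi e x, ?_, ?_⟩
    · have h1 : S.phi e x ∈ S.phi e '' K (S.dst e) := ⟨x, by rw [hde]; exact hx, rfl⟩
      have h2 := phi_image_subset S hK e h1
      rwa [he] at h2
    · have h1 : S.phi e' x ∈ S.phi e' '' K (S.dst e') :=
        ⟨x, by rw [hde', ← hij']; exact hx, rfl⟩
      have h2 := phi_image_subset S hK e' h1
      rw [he'] at h2
      rwa [phi_eq_of_t_eq S ht]
  · refine ⟨x, ?_, ?_⟩
    · rw [← hde] at hx1
      have h2 := phi_image_subset S hK e hx1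
      rwa [he] at h2
    · rw [← hde'] at hx2
      have h2 := phi_image_subset S hK e' hx2
      rwa [he'] at h2

lemma terminatedWalk_nonempty (hK : S.IsAttractor K) {i j : Fin n}
    (h : CantorGDS.TerminatedWalk S K i j) : (K i ∩ K j).Nonempty := by
  obtain ⟨m, p, q, hp0, hq0, hchain, hterm⟩ := h
  have key : ∀ l, l ≤ m → (K (p (m - l)) ∩ K (q (m - l))).Nonempty := by
    intro l
    induction l with
    | zero => intro _; simpa using term_nonempty S hK hterm
    | succ l ih =>
      intro hl
      have hlm : l ≤ m := by omega
      have h1 : m - (l + 1) + 1 = m - l := by omega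
      have h2 : m - (l + 1) < m := by omega
      have hE := hchain (m - (l + 1)) h2
      rw [h1] at hE
      exact solid_nonempty S hK hE (ih hlm)
  have := key m le_rfl
  simpa [hp0, hq0] using this

lemma infSolid_nonempty (hN : 2 ≤ N) (hK : S.IsAttractor K) {i j : Fin n}
    (h : CantorGDS.InfSolidWalk S i j) : (K i ∩ K j).Nonempty := by
  obtain ⟨p, q, hp0, hq0, hchain⟩ := h
  choose e e' hsrc hdst hsrc' hdst' ht using fun k => (hchain k).2
  choose y hy using fun k => hK.1 (p k)
  choose z hz using fun k => hK.1 (q k)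
  have hN0 : (0 : ℝ) < N := by positivity
  set a : ℕ → (Fin d → ℝ) := fun k => S.compWalk e k (y k) with ha_def
  set b : ℕ → (Fin d → ℝ) := fun k => S.compWalk e' k (z k) with hb_def
  have ha : ∀ k, a k ∈ K i := by
    intro k
    have := compWalk_mem S hK e p hsrc hdst k (y k) (hy k)
    rwa [hp0] at this
  have hb : ∀ k, b k ∈ K j := by
    intro k
    have := compWalk_mem S hK e' q hsrc' hdst' k (z k) (hz k)
    rwa [hq0] at this
  have hphi : ∀ k, S.phi (e k) = S.phi (e' k) := fun k => phi_eq_of_t_eq S (ht k)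
  have hcw := compWalk_congr S hphi
  have hdyz : ∀ k, dist (y k) (z k) ≤ 1 := by
    intro k
    rw [dist_pi_le_iff zero_le_one]
    intro m
    have h1 := attractor_subset_cube S hN hK _ (hy k) m
    have h2 := attractor_subset_cube S hN hK _ (hz k) m
    rw [Real.dist_eq, abs_le]
    constructor <;> [linarith [h1.1, h1.2, h2.1, h2.2]; linarith [h1.1, h1.2, h2.1, h2.2]]
  have hdist : ∀ k, dist (a k) (b k) ≤ (1 / N : ℝ) ^ k := by
    intro k
    have h1 : b k = S.compWalk e k (z k) := by rw [hb_def]; simp only; rw [hcw k]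
    rw [h1]
    calc dist (S.compWalk e k (y k)) (S.compWalk e k (z k))
        ≤ dist (y k) (z k) * (1 / N) ^ k := compWalk_dist S hN e k _ _
      _ ≤ 1 * (1 / N) ^ k := by gcongr; exact hdyz k
      _ = (1 / N) ^ k := one_mul _
  have hlim : Tendsto (fun k => dist (a k) (b k)) atTop (𝓝 0) := by
    apply squeeze_zero (fun k => dist_nonneg) hdist
    apply tendsto_pow_atTop_nhds_zero_of_lt_one (by positivity)
    rw [div_lt_one hN0]
    have hNr : (2:ℝ) ≤ N := by exact_mod_cast hN
    linarith
  obtain ⟨x, hxK, φ, hφ, hconv⟩ := (hK.2.1 i).tendsto_subseq ha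
  have haconv : Tendsto (fun l => dist (a (φ l)) x) atTop (𝓝 0) :=
    tendsto_iff_dist_tendsto_zero.1 hconv
  have hbconv : Tendsto (fun l => b (φ l)) atTop (𝓝 x) := by
    rw [tendsto_iff_dist_tendsto_zero]
    have hsum : Tendsto (fun l => dist (a (φ l)) (b (φ l)) + dist (a (φ l)) x)
        atTop (𝓝 0) := by
      have := (hlim.comp hφ.tendsto_atTop).add haconv
      simpa using this
    apply squeeze_zero (fun l => dist_nonneg) _ hsum
    intro l
    calc dist (b (φ l)) x ≤ dist (b (φ l)) (a (φ l)) + dist (a (φ l)) x := dist_triangle _ _ _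
      _ = dist (a (φ l)) (b (φ l)) + dist (a (φ l)) x := by rw [dist_comm]
  exact ⟨x, hxK, (hK.2.1 j).isClosed.mem_of_tendsto hbconv
    (Filter.Eventually.of_forall fun l => hb (φ l))⟩

/-- Auxiliary for the forward direction: a triple `(a, b, x)` with `a ≠ b` and
`x ∈ K a ∩ K b`. -/
def GoodT (K : Fin n → Set (Fin d → ℝ)) (w : Fin n × Fin n × (Fin d → ℝ)) : Prop :=
  w.1 ≠ w.2.1 ∧ w.2.2 ∈ K w.1 ∧ w.2.2 ∈ K w.2.1

/-- There is a solid-edge successor triple that is again good. -/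
def StepEx (S : CantorGDS d N n) (K : Fin n → Set (Fin d → ℝ))
    (w : Fin n × Fin n × (Fin d → ℝ)) : Prop :=
  ∃ w', CantorGDS.SolidEdge S w.1 w.2.1 w'.1 w'.2.1 ∧ GoodT K w'

/-- There is a terminated edge out of `(a, b)`. -/
def TermAt (S : CantorGDS d N n) (K : Fin n → Set (Fin d → ℝ)) (a b : Fin n) : Prop :=
  ∃ a' b', CantorGDS.TerminatedEdge S K a b a' b'

open Classical in
/-- Choice-based successor function for the forward direction. -/
noncomputable def nxt (S : CantorGDS d N n) (K : Fin n → Set (Fin d → ℝ))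
    (w : Fin n × Fin n × (Fin d → ℝ)) : Fin n × Fin n × (Fin d → ℝ) :=
  if h : StepEx S K w then h.choose else w

lemma step_lemma (hN : 2 ≤ N) (hK : S.IsAttractor K)
    (w : Fin n × Fin n × (Fin d → ℝ)) (hw : GoodT K w) :
    TermAt S K w.1 w.2.1 ∨ StepEx S K w := by
  obtain ⟨hne, hx1, hx2⟩ := hw
  rw [hK.2.2 w.1] at hx1
  rw [hK.2.2 w.2.1] at hx2
  simp only [Set.mem_iUnion] at hx1 hx2
  obtain ⟨e, he, y, hy, hxy⟩ := hx1
  obtain ⟨e', he', z, hz, hxz⟩ := hx2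
  have hNr : (2 : ℝ) ≤ N := by exact_mod_cast hN
  have hN0 : (0 : ℝ) < N := by linarith
  have hcoord : ∀ m, (y m + S.t e m) / N = (z m + S.t e' m) / N := by
    intro m
    have h1 : S.phi e y = S.phi e' z := by rw [hxy, hxz]
    exact congrFun h1 m
  by_cases h : S.t e = S.t e'
  · have hyz : y = z := by
      funext m
      have h1 := hcoord m
      rw [h] at h1
      field_simp at h1
      linarith
    by_cases hdd : S.dst e = S.dst e'
    · exact Or.inl ⟨S.dst e, S.dst e, hne, e, e', he, rfl, he', hdd.symm, Or.inl ⟨h, rfl⟩⟩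
    · exact Or.inr ⟨(S.dst e, S.dst e', y), ⟨hne, e, e', he, rfl, he', rfl, h⟩,
        hdd, hy, hyz ▸ hz⟩
  · left
    refine ⟨S.dst e, S.dst e', hne, e, e', he, rfl, he', rfl, Or.inr ⟨⟨h, ?_⟩, ?_⟩⟩
    · intro m
      have h1 := hcoord m
      have h2 : y m + S.t e m = z m + S.t e' m := by
        field_simp at h1
        linarith
      have hy1 := attractor_subset_cube S hN hK _ hy m
      have hz1 := attractor_subset_cube S hN hK _ hz m
      have hb1 : ((S.t e m : ℤ) - S.t e' m : ℤ) ≤ 1 := by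
        have : ((S.t e m : ℤ) - (S.t e' m : ℤ) : ℝ) ≤ 1 := by
          push_cast
          linarith [hy1.1, hy1.2, hz1.1, hz1.2]
        exact_mod_cast this
      have hb2 : (-1 : ℤ) ≤ ((S.t e m : ℤ) - S.t e' m : ℤ) := by
        have : (-1 : ℝ) ≤ ((S.t e m : ℤ) - (S.t e' m : ℤ) : ℝ) := by
          push_cast
          linarith [hy1.1, hy1.2, hz1.1, hz1.2]
        exact_mod_cast this
      omega
    · exact ⟨w.2.2, ⟨y, hy, hxy⟩, ⟨z, hz, hxz⟩⟩

end Aux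

/-- **Theorem (intersecting criterion).** For a Cantor-type graph-directed attractor
`(K 1, …, K n)` in `ℝ^d` and distinct `i, j`, `K i ∩ K j ≠ ∅` iff in the associated
intersecting graph there is a terminated finite walk or an infinite solid walk
starting from `(i,j)`. -/
theorem intersect_iff_terminated_or_infSolid
    {d N n : ℕ} (hd : 1 ≤ d) (hN : 2 ≤ N) (hn : 1 ≤ n)
    (S : CantorGDS d N n) (K : Fin n → Set (Fin d → ℝ)) (hK : S.IsAttractor K)
    (i j : Fin n) (hij : i ≠ j) :
    (K i ∩ K j).Nonempty ↔
      CantorGDS.TerminatedWalk S K i j ∨ CantorGDS.InfSolidWalk S i j := by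
  constructor
  · rintro ⟨x₀, hx₀i, hx₀j⟩
    classical
    set s : ℕ → Fin n × Fin n × (Fin d → ℝ) := fun k => (nxt S K)^[k] (i, j, x₀) with hs_def
    have hs0 : s 0 = (i, j, x₀) := rfl
    have hssucc : ∀ k, s (k + 1) = nxt S K (s k) := fun k =>
      Function.iterate_succ_apply' _ _ _
    have inv : ∀ k, (∀ l < k, ¬ TermAt S K (s l).1 (s l).2.1) →
        GoodT K (s k) ∧
          ∀ l < k, CantorGDS.SolidEdge S (s l).1 (s l).2.1 (s (l + 1)).1 (s (l + 1)).2.1 := by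
      intro k
      induction k with
      | zero =>
        intro _
        refine ⟨?_, fun l hl => absurd hl (Nat.not_lt_zero l)⟩
        rw [hs0]
        exact ⟨hij, hx₀i, hx₀j⟩
      | succ k ih =>
        intro hl
        have hlk : ∀ l < k, ¬ TermAt S K (s l).1 (s l).2.1 := fun l hlt => hl l (by omega)
        obtain ⟨hg, hedges⟩ := ih hlk
        have hnt : ¬ TermAt S K (s k).1 (s k).2.1 := hl k (by omega)
        rcases step_lemma S hN hK (s k) hg with hT | hP
        · exact absurd hT hnt
        · have hnx : s (k + 1) = hP.choose := by rw [hssucc, nxt, dif_pos hP]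
          have hspec := hP.choose_spec
          rw [← hnx] at hspec
          refine ⟨hspec.2, ?_⟩
          intro l hlt
          rcases Nat.lt_succ_iff_lt_or_eq.1 hlt with h | h
          · exact hedges l h
          · subst h; exact hspec.1
    by_cases hc : ∃ k, TermAt S K (s k).1 (s k).2.1
    · left
      have hterm := Nat.find_spec hc
      set k₀ := Nat.find hc with hk₀
      have hmin : ∀ l < k₀, ¬ TermAt S K (s l).1 (s l).2.1 := fun l hl => Nat.find_min hc hl
      obtain ⟨hg, hedges⟩ := inv k₀ hmin
      obtain ⟨a', b', hT⟩ := hterm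
      refine ⟨k₀, fun l => if l = k₀ + 1 then a' else (s l).1,
        fun l => if l = k₀ + 1 then b' else (s l).2.1, ?_, ?_, ?_, ?_⟩
      · simp only [if_neg (show (0 : ℕ) ≠ k₀ + 1 by omega)]
        rw [hs0]
      · simp only [if_neg (show (0 : ℕ) ≠ k₀ + 1 by omega)]
        rw [hs0]
      · intro l hl
        simp only [if_neg (show l ≠ k₀ + 1 by omega),
          if_neg (show l + 1 ≠ k₀ + 1 by omega)]
        exact hedges l hl
      · simp only [if_neg (show k₀ ≠ k₀ + 1 by omega), if_pos rfl]
        exact hT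
    · right
      push_neg at hc
      refine ⟨fun k => (s k).1, fun k => (s k).2.1, ?_, ?_, ?_⟩
      · show (s 0).1 = i
        rw [hs0]
      · show (s 0).2.1 = j
        rw [hs0]
      · intro k
        exact (inv (k + 1) (fun l _ => hc l)).2 k (by omega)
  · rintro (h | h)
    · exact terminatedWalk_nonempty S hK h
    · exact infSolid_nonempty S hN hK h
end

section
/- Let (K_1,…,K_n) be a Cantor-type graph-directed attractor in ℝ^d with level-k approximations Q_{i,k}, and set c(n,d) := (d−1)n² + (n²+n)/2 + d − 1. Then for every pair of distinct indices i, j ∈ {1,…,n}, K_i ∩ K_j ≠ ∅ if and only if Q_{i,c(n,d)} ∩ Q_{j,c(n,d)} ≠ ∅. -/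
/-!
Two walks from `i` and `j` whose level-`k` cubes are adjacent differ, after scaling by `N ^ k`,
by an integer offset in `{-1, 0, 1}^d`, and a coordinate of the offset never changes once it is
nonzero. A point of `Q_{i,c} ∩ Q_{j,c}` gives such walks for all `k ≤ c`, while walks adjacent at
every level give a common point of `K i` and `K j` by compactness. Finite adjacent walks can be
pumped into infinite ones as soon as, among the levels `0, …, c`, the offset vanishes over a
common vertex, the pair of vertices and the offset repeat, the pair of vertices is swapped
between two zero offsets, or, in full support (where the digits are forced), each walk repeats a
vertex. Avoiding all four allows at most `(n² + n) / 2 + (d - 1) n² = c + 1 - d` levels.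
-/

open Set

open Metric Finset

lemma Set.exists_lt_of_not_injOn {α β : Type*} [LinearOrder α] {f : α → β} {s : Set α}
    (h : ¬ s.InjOn f) : ∃ a ∈ s, ∃ b ∈ s, a < b ∧ f a = f b := by
  simp only [Set.InjOn, not_forall] at h
  obtain ⟨a, ha, b, hb, hab, hne⟩ := h
  rcases lt_or_gt_of_ne hne with h | h
  exacts [⟨a, ha, b, hb, h, hab⟩, ⟨b, hb, a, ha, h, hab.symm⟩]

lemma IsCompact.inter_nonempty_of_forall_dist_lt {X : Type*} [PseudoMetricSpace X]
    {s t : Set X} (hs : IsCompact s) (ht : IsClosed t)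
    (h : ∀ ε > 0, ∃ x ∈ s, ∃ y ∈ t, dist x y < ε) : (s ∩ t).Nonempty := by
  by_contra hst
  obtain ⟨δ, hδ, hdisj⟩ := (Set.disjoint_iff_inter_eq_empty.mpr
    (Set.not_nonempty_iff_eq_empty.mp hst)).exists_thickenings hs ht
  obtain ⟨x, hx, y, hy, hxy⟩ := h δ hδ
  exact hdisj.ne_of_mem (mem_thickening_iff.mpr ⟨x, hx, by rwa [dist_comm]⟩)
    (self_subset_thickening hδ t hy) rfl

lemma Nat.choose_two_add_self (n : ℕ) : n.choose 2 + n = (n ^ 2 + n) / 2 := by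
  have h : (n + 1).choose 2 = n + n.choose 2 := by simpa using Nat.choose_succ_succ' n 1
  rw [add_comm, ← h, Nat.choose_two_right, Nat.add_sub_cancel]
  congr 1
  ring

/-- The index sequence `0, 1, …, b - 1, a, a + 1, …, b - 1, a, …`. -/
def loopIndex (a b : ℕ) : ℕ → ℕ
  | 0 => 0
  | k + 1 => if loopIndex a b k + 1 = b then a else loopIndex a b k + 1

lemma loopIndex_succ (a b k : ℕ) :
    loopIndex a b (k + 1) = if loopIndex a b k + 1 = b then a else loopIndex a b k + 1 := rfl

lemma loopIndex_of_lt {a b k : ℕ} (hk : k < b) : loopIndex a b k = k := by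
  induction k with
  | zero => rfl
  | succ k ih => rw [loopIndex_succ, ih (by omega), if_neg (by omega)]

lemma loopIndex_lt {a b : ℕ} (hab : a < b) (k : ℕ) : loopIndex a b k < b := by
  induction k with
  | zero => exact (Nat.zero_le a).trans_lt hab
  | succ k ih => rw [loopIndex_succ]; split_ifs <;> omega

lemma min_le_loopIndex (a b k : ℕ) : min a k ≤ loopIndex a b k := by
  induction k with
  | zero => simp
  | succ k ih => rw [loopIndex_succ]; split_ifs <;> omega

def splice {α : Type*} (e g : ℕ → α) (a b : ℕ) (k : ℕ) : α :=
  if k < a then e k else g (k - a + b)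

lemma splice_of_lt {α : Type*} {e g : ℕ → α} {a b k : ℕ} (hk : k < a) :
    splice e g a b k = e k := if_pos hk

lemma splice_of_le {α : Type*} {e g : ℕ → α} {a b k : ℕ} (hk : a ≤ k) :
    splice e g a b k = g (k - a + b) := if_neg (by omega)

lemma splice_add {α : Type*} (e g : ℕ → α) (a b r : ℕ) : splice e g a b (a + r) = g (b + r) := by
  rw [splice_of_le (by omega)]
  congr 1
  omega

lemma unitCube_eq_Icc (d : ℕ) : unitCube d = Set.Icc 0 1 := by
  ext x
  simp [unitCube, Pi.le_def, forall_and]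

namespace CantorGDS

variable {d N n : ℕ} {S : CantorGDS d N n} {K : Fin n → Set (Fin d → ℝ)}

lemma phi_eq_smul (e : S.E) (x : Fin d → ℝ) :
    S.phi e x = (N : ℝ)⁻¹ • (x + fun m => (S.t e m : ℝ)) := by
  ext m
  simp [phi, cmap, div_eq_inv_mul]

lemma dist_phi (e : S.E) (x y : Fin d → ℝ) : dist (S.phi e x) (S.phi e y) = dist x y / N := by
  rw [phi_eq_smul, phi_eq_smul, dist_smul₀, dist_add_right, norm_inv, Real.norm_natCast,
    inv_mul_eq_div]

lemma mapsTo_phi_unitCube (e : S.E) : Set.MapsTo (S.phi e) (unitCube d) (unitCube d) := by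
  intro x hx m
  have ht : (S.t e m : ℝ) + 1 ≤ N := by exact_mod_cast S.t_lt e m
  obtain ⟨h0, h1⟩ := hx m
  simp only [phi, cmap]
  exact ⟨by positivity,
    (div_le_one (by linarith [(S.t e m).cast_nonneg (α := ℝ)])).mpr (by linarith)⟩

lemma infDist_phi_le (hN : 0 < N) (e : S.E) (x : Fin d → ℝ) :
    infDist (S.phi e x) (unitCube d) ≤ infDist x (unitCube d) / N := by
  have hN' : (0 : ℝ) < N := by exact_mod_cast hN
  rw [le_div_iff₀ hN', le_infDist (by simp [unitCube_eq_Icc])]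
  intro y hy
  rw [← le_div_iff₀ hN', ← dist_phi]
  exact infDist_le_dist_of_mem (mapsTo_phi_unitCube e hy)

/-- Each `φ_e` maps the cube into itself and divides the distance to it by `N`. -/
lemma attractor_subset_unitCube (hN : 1 < N) (hK : S.IsAttractor K) (i : Fin n) :
    K i ⊆ unitCube d := by
  obtain ⟨r, hr⟩ :=
    (Bornology.isBounded_iUnion.mpr fun i => (hK.2.1 i).isBounded).subset_closedBall 0
  have hdecay : ∀ k i, ∀ x ∈ K i, infDist x (unitCube d) ≤ r / (N : ℝ) ^ k := by
    intro k
    induction k with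
    | zero =>
      intro i x hx
      rw [pow_zero, div_one]
      refine (infDist_le_dist_of_mem (y := 0) (by simp [unitCube_eq_Icc])).trans ?_
      exact mem_closedBall.mp (hr (Set.mem_iUnion_of_mem i hx))
    | succ k ih =>
      intro i x hx
      rw [hK.2.2 i] at hx
      simp only [Set.mem_iUnion, Set.mem_image] at hx
      obtain ⟨e, -, y, hy, rfl⟩ := hx
      calc infDist (S.phi e y) (unitCube d) ≤ infDist y (unitCube d) / N :=
            infDist_phi_le (by omega) e y
        _ ≤ r / (N : ℝ) ^ k / N := by gcongr; exact ih _ y hy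
        _ = r / (N : ℝ) ^ (k + 1) := by rw [pow_succ, div_div]
  intro x hx
  have hzero : infDist x (unitCube d) ≤ 0 :=
    ge_of_tendsto' ((tendsto_pow_atTop_atTop_of_one_lt (by exact_mod_cast hN)).const_div_atTop r)
      fun k => hdecay k i x hx
  rw [unitCube_eq_Icc] at hzero ⊢
  exact (isClosed_Icc.mem_iff_infDist_zero (by simp)).mpr (le_antisymm hzero infDist_nonneg)

lemma attractor_subset_Q (hN : 1 < N) (hK : S.IsAttractor K) (k : ℕ) (i : Fin n) :
    K i ⊆ S.Q k i := by
  induction k generalizing i with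
  | zero => exact attractor_subset_unitCube hN hK i
  | succ k ih =>
    rw [hK.2.2 i]
    exact Set.iUnion₂_mono fun e _ => Set.image_mono (ih _)

variable (S) in
def IsInfiniteWalk (e : ℕ → S.E) : Prop := ∀ k, S.dst (e k) = S.src (e (k + 1))

variable (S) in
/-- `N ^ k` times the difference of the corners `φ_{e_0…e_{k-1}}(0)` and `φ_{f_0…f_{k-1}}(0)` of
the level-`k` cubes of two walks: the `N`-adic integer with digits `t_{e_l} - t_{f_l}`. -/
def offset (e f : ℕ → S.E) : ℕ → Fin d → ℤ
  | 0 => 0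
  | k + 1 => fun m => N * offset e f k m + ((S.t (e k) m : ℤ) - S.t (f k) m)

lemma offset_succ (e f : ℕ → S.E) (k : ℕ) (m : Fin d) :
    S.offset e f (k + 1) m = N * S.offset e f k m + ((S.t (e k) m : ℤ) - S.t (f k) m) := rfl

lemma offset_swap (e f : ℕ → S.E) (k : ℕ) : S.offset f e k = -S.offset e f k := by
  induction k with
  | zero => simp [offset]
  | succ k ih => ext m; simp only [offset_succ, ih, Pi.neg_apply]; ring

lemma offset_self (e : ℕ → S.E) (k : ℕ) : S.offset e e k = 0 := by
  induction k with
  | zero => rfl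
  | succ k ih => ext m; simp [offset_succ, ih]

lemma offset_add_congr {e f e' f' : ℕ → S.E} {a b : ℕ} (h0 : S.offset e f a = S.offset e' f' b)
    {R : ℕ} (h : ∀ r < R, S.t (e (a + r)) = S.t (e' (b + r)) ∧ S.t (f (a + r)) = S.t (f' (b + r))) :
    S.offset e f (a + R) = S.offset e' f' (b + R) := by
  induction R with
  | zero => exact h0
  | succ R ih =>
    ext m
    obtain ⟨he, hf⟩ := h R (by omega)
    rw [← add_assoc, ← add_assoc, offset_succ, offset_succ, ih fun r hr => h r (by omega), he, hf]

lemma offset_congr {e f e' f' : ℕ → S.E} {R : ℕ} (h : ∀ r < R, e r = e' r ∧ f r = f' r) :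
    S.offset e f R = S.offset e' f' R := by
  have := offset_add_congr (e := e) (f := f) (e' := e') (f' := f') (a := 0) (b := 0) rfl
    (R := R) fun r hr => by simp only [zero_add, (h r hr).1, (h r hr).2, and_self]
  simpa using this

variable (S) in
lemma exists_isInfiniteWalk (v : Fin n) : ∃ e, S.IsInfiniteWalk e ∧ S.src (e 0) = v := by
  choose out hout using S.exists_out
  refine ⟨fun k => out ((S.dst ∘ out)^[k] v), fun k => ?_, hout v⟩
  rw [hout, Function.iterate_succ_apply']
  rfl

lemma IsInfiniteWalk.cons {e₀ : S.E} {e : ℕ → S.E} (he : S.IsInfiniteWalk e)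
    (h : S.dst e₀ = S.src (e 0)) : S.IsInfiniteWalk (Stream'.cons e₀ e) := by
  rintro (_ | k)
  exacts [h, he k]

lemma compWalk_cons (e₀ : S.E) (e : ℕ → S.E) (k : ℕ) :
    S.compWalk (Stream'.cons e₀ e) (k + 1) = S.phi e₀ ∘ S.compWalk e k := by
  induction k with
  | zero => rfl
  | succ k ih => exact congrArg (· ∘ S.phi (e k)) ih

lemma exists_isInfiniteWalk_of_mem_Q {k : ℕ} {i : Fin n} {x : Fin d → ℝ} (hx : x ∈ S.Q k i) :
    ∃ e, S.IsInfiniteWalk e ∧ S.src (e 0) = i ∧ ∃ ξ ∈ unitCube d, x = S.compWalk e k ξ := by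
  induction k generalizing i x with
  | zero =>
    obtain ⟨e, he, he0⟩ := S.exists_isInfiniteWalk i
    exact ⟨e, he, he0, x, hx, rfl⟩
  | succ k ih =>
    simp only [Q, Set.mem_iUnion, Set.mem_image] at hx
    obtain ⟨e₀, rfl, y, hy, rfl⟩ := hx
    obtain ⟨e, he, he0, ξ, hξ, rfl⟩ := ih hy
    exact ⟨_, he.cons he0.symm, rfl, ξ, hξ, by rw [compWalk_cons]; rfl⟩

lemma compWalk_image_subset (hK : S.IsAttractor K) {e : ℕ → S.E} (he : S.IsInfiniteWalk e)
    (k : ℕ) : S.compWalk e k '' K (S.src (e k)) ⊆ K (S.src (e 0)) := by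
  induction k with
  | zero => simp [compWalk]
  | succ k ih =>
    rw [show S.compWalk e (k + 1) = S.compWalk e k ∘ S.phi (e k) from rfl, Set.image_comp,
      ← he k]
    refine (Set.image_mono ?_).trans ih
    rw [hK.2.2 (S.src (e k))]
    exact Set.subset_iUnion₂_of_subset (e k) rfl subset_rfl

lemma compWalk_sub_compWalk (hN : N ≠ 0) (e f : ℕ → S.E) (k : ℕ) (x y : Fin d → ℝ) (m : Fin d) :
    S.compWalk e k x m - S.compWalk f k y m = (x m - y m + S.offset e f k m) / (N : ℝ) ^ k := by
  induction k generalizing x y with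
  | zero => simp [compWalk, offset]
  | succ k ih =>
    rw [show S.compWalk e (k + 1) x = S.compWalk e k (S.phi (e k) x) from rfl,
      show S.compWalk f (k + 1) y = S.compWalk f k (S.phi (f k) y) from rfl, ih, offset_succ]
    simp only [phi, cmap]
    push_cast
    field_simp
    ring

lemma abs_offset_le_one_of_compWalk_eq (hN : N ≠ 0) {e f : ℕ → S.E} {k : ℕ}
    {ξ η : Fin d → ℝ} (hξ : ξ ∈ unitCube d) (hη : η ∈ unitCube d)
    (h : S.compWalk e k ξ = S.compWalk f k η) (m : Fin d) : |S.offset e f k m| ≤ 1 := by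
  have hsub := compWalk_sub_compWalk hN e f k ξ η m
  rw [h, sub_self, eq_comm, div_eq_zero_iff, or_iff_left (by positivity)] at hsub
  obtain ⟨hξ0, hξ1⟩ := hξ m
  obtain ⟨hη0, hη1⟩ := hη m
  have : |(S.offset e f k m : ℝ)| ≤ 1 := by rw [abs_le]; constructor <;> linarith
  exact_mod_cast this

/-- Adjacent level-`k` cubes at every level give points of the two attractor pieces at distance
`≤ 2 / N ^ k` for every `k`. -/
theorem inter_nonempty_of_abs_offset_le_one (hN : 1 < N) (hK : S.IsAttractor K)
    {e f : ℕ → S.E} (he : S.IsInfiniteWalk e) (hf : S.IsInfiniteWalk f)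
    (hb : ∀ k m, |S.offset e f k m| ≤ 1) : (K (S.src (e 0)) ∩ K (S.src (f 0))).Nonempty := by
  refine (hK.2.1 _).inter_nonempty_of_forall_dist_lt (hK.2.1 _).isClosed fun ε hε => ?_
  obtain ⟨k, hk⟩ := (((tendsto_pow_atTop_atTop_of_one_lt (by exact_mod_cast hN : (1 : ℝ) < N)
    ).const_div_atTop 2).eventually (gt_mem_nhds hε)).exists
  obtain ⟨z, hz⟩ := hK.1 (S.src (e k))
  obtain ⟨w, hw⟩ := hK.1 (S.src (f k))
  refine ⟨_, compWalk_image_subset hK he k ⟨z, hz, rfl⟩,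
    _, compWalk_image_subset hK hf k ⟨w, hw, rfl⟩, (dist_pi_lt_iff hε).mpr fun m => ?_⟩
  obtain ⟨hz0, hz1⟩ := attractor_subset_unitCube hN hK _ hz m
  obtain ⟨hw0, hw1⟩ := attractor_subset_unitCube hN hK _ hw m
  have hbm : |(S.offset e f k m : ℝ)| ≤ 1 := by exact_mod_cast hb k m
  rw [abs_le] at hbm
  have hNk : (0 : ℝ) < (N : ℝ) ^ k := pow_pos (by exact_mod_cast (by omega : 0 < N)) k
  rw [Real.dist_eq, compWalk_sub_compWalk (by omega), abs_div, abs_of_pos hNk]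
  refine lt_of_le_of_lt (div_le_div_of_nonneg_right ?_ hNk.le) hk
  rw [abs_le]
  constructor <;> linarith

section Dynamics

variable {e f : ℕ → S.E}

lemma two_le_abs_offset_succ (hN : 2 ≤ N) {k : ℕ} {m : Fin d}
    (h : 2 ≤ |S.offset e f k m|) : 2 ≤ |S.offset e f (k + 1) m| := by
  have he : (S.t (e k) m : ℤ) < N := by exact_mod_cast S.t_lt (e k) m
  have hf : (S.t (f k) m : ℤ) < N := by exact_mod_cast S.t_lt (f k) m
  have hN' : (2 : ℤ) ≤ N := by exact_mod_cast hN
  rw [le_abs'] at h ⊢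
  rw [offset_succ]
  rcases h with h | h
  · left; nlinarith
  · right; nlinarith

lemma abs_offset_le_one_of_le (hN : 2 ≤ N) {c : ℕ} (hc : ∀ m, |S.offset e f c m| ≤ 1)
    {k : ℕ} (hk : k ≤ c) (m : Fin d) : |S.offset e f k m| ≤ 1 := by
  by_contra! h
  have hgrow : ∀ l, k ≤ l → 2 ≤ |S.offset e f l m| := fun l hl => by
    induction l, hl using Nat.le_induction with
    | base => exact h
    | succ l _ ih => exact two_le_abs_offset_succ hN ih
  linarith [hgrow c hk, hc m]

/-- A nonzero coordinate `±1` of the offset can only be kept in `[-1, 1]` by the extreme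
digits `0` and `N - 1`, which reproduce it. -/
lemma offset_succ_eq_of_ne_zero {k : ℕ} {m : Fin d} (h : S.offset e f k m ≠ 0)
    (hk : |S.offset e f k m| ≤ 1) (hk1 : |S.offset e f (k + 1) m| ≤ 1) :
    S.offset e f (k + 1) m = S.offset e f k m := by
  have he : (S.t (e k) m : ℤ) < N := by exact_mod_cast S.t_lt (e k) m
  have hf : (S.t (f k) m : ℤ) < N := by exact_mod_cast S.t_lt (f k) m
  rw [offset_succ] at hk1 ⊢
  rw [abs_le] at hk hk1
  rcases (by omega : S.offset e f k m = 1 ∨ S.offset e f k m = -1) with h1 | h1 <;>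
    rw [h1] at hk1 ⊢ <;> omega

lemma offset_eq_of_ne_zero {c : ℕ} (hb : ∀ k ≤ c, ∀ m, |S.offset e f k m| ≤ 1) {l l' : ℕ}
    {m : Fin d} (h : S.offset e f l m ≠ 0) (hll' : l ≤ l') (hl' : l' ≤ c) :
    S.offset e f l' m = S.offset e f l m := by
  induction l', hll' using Nat.le_induction with
  | base => rfl
  | succ k hlk ih =>
    rw [← ih (by omega)] at h ⊢
    exact offset_succ_eq_of_ne_zero h (hb k (by omega) m) (hb (k + 1) hl' m)

lemma digits_eq_of_offset_eq {s : Fin d → ℤ} (hs : ∀ m, s m = 1 ∨ s m = -1) {k k' : ℕ}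
    (hk : S.offset e f k = s) (hk1 : S.offset e f (k + 1) = s)
    (hk' : S.offset e f k' = s) (hk1' : S.offset e f (k' + 1) = s) :
    S.t (e k) = S.t (e k') ∧ S.t (f k) = S.t (f k') := by
  have key : ∀ l, S.offset e f l = s → S.offset e f (l + 1) = s → ∀ m,
      (S.t (e l) m : ℤ) - S.t (f l) m = s m - N * s m := fun l hl hl1 m => by
    have h := offset_succ e f l m
    rw [hl, hl1] at h
    linarith
  constructor <;> ext m <;> have h := key k hk hk1 m <;> have h' := key k' hk' hk1' m <;>
    have := S.t_lt (e k) m <;> have := S.t_lt (f k) m <;> have := S.t_lt (e k') m <;>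
    have := S.t_lt (f k') m <;> rcases hs m with hm | hm <;> rw [hm] at h h' <;> omega

variable (S) in
def offsetSupport (e f : ℕ → S.E) (k : ℕ) : Finset (Fin d) :=
  univ.filter fun m => S.offset e f k m ≠ 0

lemma offsetSupport_mono {c : ℕ} (hb : ∀ k ≤ c, ∀ m, |S.offset e f k m| ≤ 1) {l l' : ℕ}
    (hll' : l ≤ l') (hl' : l' ≤ c) : S.offsetSupport e f l ⊆ S.offsetSupport e f l' := by
  intro m hm
  simp only [offsetSupport, mem_filter, Finset.mem_univ, true_and] at hm ⊢
  rwa [offset_eq_of_ne_zero hb hm hll' hl']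

/-- The supports grow along `[0, c]`, so the offset there is determined by the size of its
support. -/
lemma offset_eq_of_card_offsetSupport_eq {c : ℕ} (hb : ∀ k ≤ c, ∀ m, |S.offset e f k m| ≤ 1)
    {l l' : ℕ} (hll' : l ≤ l') (hl' : l' ≤ c)
    (h : #(S.offsetSupport e f l) = #(S.offsetSupport e f l')) :
    S.offset e f l' = S.offset e f l := by
  have hsupp := eq_of_subset_of_card_le (offsetSupport_mono hb hll' hl') h.ge
  ext m
  by_cases hm : S.offset e f l m = 0
  · have : m ∉ S.offsetSupport e f l' := by rw [← hsupp]; simp [offsetSupport, hm]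
    simpa [offsetSupport, hm] using this
  · exact offset_eq_of_ne_zero hb hm hll' hl'

end Dynamics

section Pumping

variable {e f : ℕ → S.E}

lemma IsInfiniteWalk.comp_loopIndex (he : S.IsInfiniteWalk e) {a b : ℕ}
    (hab : S.src (e a) = S.src (e b)) : S.IsInfiniteWalk (e ∘ loopIndex a b) := by
  intro k
  simp only [Function.comp, loopIndex_succ]
  split_ifs with h
  · rw [he, h, hab]
  · exact he _

lemma offset_comp_loopIndex {a b : ℕ} (hab : S.offset e f a = S.offset e f b) (k : ℕ) :
    S.offset (e ∘ loopIndex a b) (f ∘ loopIndex a b) k = S.offset e f (loopIndex a b k) := by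
  induction k with
  | zero => rfl
  | succ k ih =>
    have hstep : S.offset (e ∘ loopIndex a b) (f ∘ loopIndex a b) (k + 1) =
        S.offset e f (loopIndex a b k + 1) := by
      ext m
      rw [offset_succ, ih]
      rfl
    rw [hstep, loopIndex_succ]
    split_ifs with h
    · rw [h, hab]
    · rfl

lemma IsInfiniteWalk.splice {g : ℕ → S.E} (he : S.IsInfiniteWalk e) (hg : S.IsInfiniteWalk g)
    {a b : ℕ} (hab : S.src (e a) = S.src (g b)) : S.IsInfiniteWalk (splice e g a b) := by
  intro k
  by_cases h : k + 1 < a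
  · rw [splice_of_lt h, splice_of_lt (by omega), he]
  rw [splice_of_le (by omega : a ≤ k + 1)]
  rcases (by omega : k + 1 = a ∨ a ≤ k) with h' | h'
  · rw [splice_of_lt (by omega), he, h', Nat.sub_self, zero_add, hab]
  · rw [splice_of_le h', hg, show k + 1 - a + b = k - a + b + 1 by omega]

lemma src_splice_zero {g : ℕ → S.E} {a b : ℕ} (hab : S.src (e a) = S.src (g b)) :
    S.src (splice e g a b 0) = S.src (e 0) := by
  rcases Nat.eq_zero_or_pos a with rfl | ha
  · rw [splice_of_le le_rfl, Nat.sub_self, zero_add, hab]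
  · rw [splice_of_lt ha]

lemma offset_splice_of_le {g h : ℕ → S.E} {a b k : ℕ} (hk : k ≤ a) :
    S.offset (splice e g a b) (splice f h a b) k = S.offset e f k :=
  offset_congr fun r hr => ⟨splice_of_lt (by omega), splice_of_lt (by omega)⟩

lemma offset_splice_add {g h : ℕ → S.E} {a b : ℕ} (hab : S.offset e f a = S.offset g h b)
    (r : ℕ) : S.offset (splice e g a b) (splice f h a b) (a + r) = S.offset g h (b + r) :=
  offset_add_congr ((offset_splice_of_le le_rfl).trans hab) fun r _ => by
    rw [splice_add, splice_add]
    exact ⟨rfl, rfl⟩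

theorem inter_nonempty_of_state_eq (hN : 1 < N) (hK : S.IsAttractor K)
    (he : S.IsInfiniteWalk e) (hf : S.IsInfiniteWalk f) {l l' : ℕ} (hll' : l < l')
    (hp : S.src (e l) = S.src (e l')) (hq : S.src (f l) = S.src (f l'))
    (hδ : S.offset e f l = S.offset e f l') (hb : ∀ k ≤ l', ∀ m, |S.offset e f k m| ≤ 1) :
    (K (S.src (e 0)) ∩ K (S.src (f 0))).Nonempty := by
  have := inter_nonempty_of_abs_offset_le_one hN hK (he.comp_loopIndex hp) (hf.comp_loopIndex hq)
    fun k m => by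
      rw [offset_comp_loopIndex hδ]
      exact hb _ (loopIndex_lt hll' k).le m
  exact this

/-- Once the cubes coincide over a common vertex, both walks can follow the same continuation. -/
theorem inter_nonempty_of_offset_eq_zero (hN : 1 < N) (hK : S.IsAttractor K)
    (he : S.IsInfiniteWalk e) (hf : S.IsInfiniteWalk f) {l : ℕ}
    (hpq : S.src (e l) = S.src (f l)) (h0 : S.offset e f l = 0)
    (hb : ∀ k ≤ l, ∀ m, |S.offset e f k m| ≤ 1) :
    (K (S.src (e 0)) ∩ K (S.src (f 0))).Nonempty := by
  obtain ⟨g, hg, hg0⟩ := S.exists_isInfiniteWalk (S.src (e l))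
  have hfg : S.src (f l) = S.src (g 0) := (hg0.trans hpq).symm
  have hδ : S.offset e f l = S.offset g g 0 := h0.trans (offset_self g 0).symm
  have := inter_nonempty_of_abs_offset_le_one hN hK (he.splice hg hg0.symm) (hf.splice hg hfg)
    fun k m => by
      rcases le_or_gt k l with hk | hk
      · rw [offset_splice_of_le hk]
        exact hb k hk m
      · obtain ⟨r, rfl⟩ := Nat.exists_eq_add_of_le hk.le
        simp [offset_splice_add hδ, offset_self]
  rwa [src_splice_zero hg0.symm, src_splice_zero hfg] at this

/-- If the cubes coincide at levels `l < l'` and the vertices are swapped in between, exchanging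
the two walks after `l'` closes a loop of length `2 (l' - l)`. -/
theorem inter_nonempty_of_state_swap (hN : 1 < N) (hK : S.IsAttractor K)
    (he : S.IsInfiniteWalk e) (hf : S.IsInfiniteWalk f) {l l' : ℕ} (hll' : l < l')
    (hpq : S.src (e l') = S.src (f l)) (hqp : S.src (f l') = S.src (e l))
    (h0 : S.offset e f l = 0) (h0' : S.offset e f l' = 0)
    (hb : ∀ k ≤ l', ∀ m, |S.offset e f k m| ≤ 1) :
    (K (S.src (e 0)) ∩ K (S.src (f 0))).Nonempty := by
  have hδ : S.offset e f l' = S.offset f e l := by rw [h0', offset_swap, h0, neg_zero]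
  have hhigh : ∀ r, S.offset (splice e f l' l) (splice f e l' l) (l' + r) =
      -S.offset e f (l + r) := fun r => by rw [offset_splice_add hδ, offset_swap]
  have := inter_nonempty_of_state_eq hN hK (he.splice hf hpq) (hf.splice he hqp)
    (l := l) (l' := l' + (l' - l)) (by omega)
    (by rw [splice_of_lt hll', splice_add, Nat.add_sub_cancel' hll'.le, hqp])
    (by rw [splice_of_lt hll', splice_add, Nat.add_sub_cancel' hll'.le, hpq])
    (by rw [offset_splice_of_le hll'.le, hhigh, Nat.add_sub_cancel' hll'.le, h0, h0', neg_zero])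
    fun k hk m => by
      rcases le_or_gt k l' with hk' | hk'
      · rw [offset_splice_of_le hk']
        exact hb k hk' m
      · obtain ⟨r, rfl⟩ := Nat.exists_eq_add_of_le hk'.le
        rw [hhigh, Pi.neg_apply, abs_neg]
        exact hb (l + r) (by omega) m
  rwa [src_splice_zero hpq, src_splice_zero hqp] at this

/-- In full support the offset can only persist with the extreme digits, so the digits of `e`
and of `f` are constant from level `b` on and each walk can be pumped on its own. -/
theorem inter_nonempty_of_offset_ne_zero (hN : 1 < N) (hK : S.IsAttractor K)
    (he : S.IsInfiniteWalk e) (hf : S.IsInfiniteWalk f) {b l l' m m' c : ℕ}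
    (hbl : b ≤ l) (hll' : l < l') (hl'c : l' ≤ c) (hbm : b ≤ m) (hmm' : m < m') (hm'c : m' ≤ c)
    (hp : S.src (e l) = S.src (e l')) (hq : S.src (f m) = S.src (f m'))
    (hne : ∀ j, S.offset e f b j ≠ 0)
    (hconst : ∀ k, b ≤ k → k ≤ c → S.offset e f k = S.offset e f b)
    (hb : ∀ k ≤ b, ∀ j, |S.offset e f k j| ≤ 1) :
    (K (S.src (e 0)) ∩ K (S.src (f 0))).Nonempty := by
  set e' := e ∘ loopIndex l l'
  set f' := f ∘ loopIndex m m'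
  have hs : ∀ j, S.offset e f b j = 1 ∨ S.offset e f b j = -1 := fun j => by
    have := abs_le.mp (hb b le_rfl j)
    have := hne j
    omega
  have hdigits : ∀ k, b ≤ k → k < c → S.t (e k) = S.t (e b) ∧ S.t (f k) = S.t (f b) :=
    fun k hbk hkc => digits_eq_of_offset_eq hs (hconst k hbk hkc.le)
      (hconst (k + 1) (by omega) hkc) rfl (hconst (b + 1) (by omega) (by omega))
  have hdigits' : ∀ k, b ≤ k → S.t (e' k) = S.t (e b) ∧ S.t (f' k) = S.t (f b) := fun k hbk =>
    ⟨(hdigits _ (le_trans (by omega) (min_le_loopIndex l l' k))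
        ((loopIndex_lt hll' k).trans_le hl'c)).1,
      (hdigits _ (le_trans (by omega) (min_le_loopIndex m m' k))
        ((loopIndex_lt hmm' k).trans_le hm'c)).2⟩
  have hlow : ∀ k ≤ b, S.offset e' f' k = S.offset e f k := fun k hk =>
    offset_congr fun r hr =>
      ⟨congrArg e (loopIndex_of_lt (by omega)), congrArg f (loopIndex_of_lt (by omega))⟩
  have hhigh : ∀ r, S.offset e' f' (b + r) = S.offset e f b := fun r => by
    induction r with
    | zero => exact hlow b le_rfl
    | succ r ih =>
      ext j
      rw [← add_assoc, offset_succ, ih, (hdigits' (b + r) (by omega)).1,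
        (hdigits' (b + r) (by omega)).2, ← offset_succ, hconst (b + 1) (by omega) (by omega)]
  have := inter_nonempty_of_abs_offset_le_one hN hK (he.comp_loopIndex hp) (hf.comp_loopIndex hq)
    fun k j => by
      rcases le_or_gt k b with hk | hk
      · rw [hlow k hk]
        exact hb k hk j
      · obtain ⟨r, rfl⟩ := Nat.exists_eq_add_of_le hk.le
        rw [hhigh]
        exact hb b le_rfl j
  exact this

end Pumping

section Counting

variable {e f : ℕ → S.E}

lemma card_filter_offset_eq_zero_le (hN : 1 < N) (hK : S.IsAttractor K)
    (he : S.IsInfiniteWalk e) (hf : S.IsInfiniteWalk f) {c : ℕ}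
    (hb : ∀ k ≤ c, ∀ m, |S.offset e f k m| ≤ 1)
    (hKK : ¬ (K (S.src (e 0)) ∩ K (S.src (f 0))).Nonempty) :
    #((Finset.Iic c).filter fun l => S.offset e f l = 0) ≤ n.choose 2 := by
  calc _ ≤ #((Finset.univ : Finset (Fin n)).offDiag.image (Function.uncurry Sym2.mk)) := by
        refine card_le_card_of_injOn (fun l => s(S.src (e l), S.src (f l))) (fun l hl => ?_) ?_
        · obtain ⟨hl, h0⟩ := mem_filter.mp hl
          refine mem_image.mpr ⟨(S.src (e l), S.src (f l)), ?_, rfl⟩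
          refine mem_offDiag.mpr ⟨Finset.mem_univ _, Finset.mem_univ _, fun hpq => hKK ?_⟩
          exact inter_nonempty_of_offset_eq_zero hN hK he hf hpq h0 fun k hk =>
            hb k (hk.trans (Finset.mem_Iic.mp hl))
        · by_contra h
          obtain ⟨l, hl, l', hl', hll', heq⟩ := Set.exists_lt_of_not_injOn h
          obtain ⟨-, h0⟩ := mem_filter.mp hl
          obtain ⟨hl', h0'⟩ := mem_filter.mp hl'
          have hb' : ∀ k ≤ l', ∀ m, |S.offset e f k m| ≤ 1 := fun k hk =>
            hb k (hk.trans (Finset.mem_Iic.mp hl'))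
          rcases Sym2.eq_iff.mp heq with ⟨hp, hq⟩ | ⟨hpq, hqp⟩
          · exact hKK (inter_nonempty_of_state_eq hN hK he hf hll' hp hq (h0.trans h0'.symm) hb')
          · exact hKK (inter_nonempty_of_state_swap hN hK he hf hll' hqp.symm hpq.symm h0 h0' hb')
    _ = n.choose 2 := by rw [Sym2.card_image_offDiag, card_univ, Fintype.card_fin]

lemma card_filter_card_offsetSupport_mem_Ioo_le (hN : 1 < N) (hK : S.IsAttractor K)
    (he : S.IsInfiniteWalk e) (hf : S.IsInfiniteWalk f) {c : ℕ}
    (hb : ∀ k ≤ c, ∀ m, |S.offset e f k m| ≤ 1)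
    (hKK : ¬ (K (S.src (e 0)) ∩ K (S.src (f 0))).Nonempty) :
    #((Finset.Iic c).filter fun l => #(S.offsetSupport e f l) ∈ Finset.Ioo 0 d) ≤
      (d - 1) * n ^ 2 := by
  calc _ ≤ #(Finset.Ioo 0 d ×ˢ (Finset.univ : Finset (Fin n × Fin n))) := by
        refine card_le_card_of_injOn
          (fun l => (#(S.offsetSupport e f l), S.src (e l), S.src (f l)))
          (fun l hl => mem_product.mpr ⟨(mem_filter.mp hl).2, Finset.mem_univ _⟩) ?_
        by_contra h
        obtain ⟨l, -, l', hl', hll', heq⟩ := Set.exists_lt_of_not_injOn h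
        simp only [Prod.mk.injEq] at heq
        have hl'c := Finset.mem_Iic.mp (mem_filter.mp hl').1
        exact hKK (inter_nonempty_of_state_eq hN hK he hf hll' heq.2.1 heq.2.2
          (offset_eq_of_card_offsetSupport_eq hb hll'.le hl'c heq.1).symm fun k hk =>
            hb k (hk.trans hl'c))
    _ = (d - 1) * n ^ 2 := by simp [sq]

lemma card_filter_offsetSupport_eq_univ_le (hN : 1 < N) (hK : S.IsAttractor K)
    (he : S.IsInfiniteWalk e) (hf : S.IsInfiniteWalk f) {c : ℕ}
    (hb : ∀ k ≤ c, ∀ m, |S.offset e f k m| ≤ 1)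
    (hKK : ¬ (K (S.src (e 0)) ∩ K (S.src (f 0))).Nonempty) :
    #((Finset.Iic c).filter fun l => S.offsetSupport e f l = Finset.univ) ≤ n := by
  set F := (Finset.Iic c).filter fun l => S.offsetSupport e f l = Finset.univ
  have hmem : ∀ l ∈ F, l ≤ c ∧ S.offsetSupport e f l = Finset.univ := fun l hl =>
    ⟨Finset.mem_Iic.mp (mem_filter.mp hl).1, (mem_filter.mp hl).2⟩
  suffices h : Set.InjOn (fun l => S.src (e l)) F ∨ Set.InjOn (fun l => S.src (f l)) F by
    rcases h with h | h <;>
      simpa using card_le_card_of_injOn _ (fun l _ => Finset.mem_univ _) h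
  by_contra h
  rw [not_or] at h
  obtain ⟨l, hl, l', hl', hll', hp⟩ := Set.exists_lt_of_not_injOn h.1
  obtain ⟨m, hm, m', hm', hmm', hq⟩ := Set.exists_lt_of_not_injOn h.2
  set b := min l m
  have hbF : S.offsetSupport e f b = Finset.univ := by
    rcases min_choice l m with h | h <;> rw [show b = _ from h]
    exacts [(hmem l hl).2, (hmem m hm).2]
  have hconst : ∀ k, b ≤ k → k ≤ c → S.offset e f k = S.offset e f b := fun k hbk hkc => by
    have hk : S.offsetSupport e f k = Finset.univ :=
      univ_subset_iff.mp (hbF ▸ offsetSupport_mono hb hbk hkc)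
    exact offset_eq_of_card_offsetSupport_eq hb hbk hkc (by rw [hbF, hk])
  have hne : ∀ j, S.offset e f b j ≠ 0 := fun j => by
    have hj : j ∈ S.offsetSupport e f b := by rw [hbF]; exact Finset.mem_univ j
    simpa [offsetSupport] using hj
  exact hKK (inter_nonempty_of_offset_ne_zero hN hK he hf (min_le_left l m) hll' (hmem l' hl').1
    (min_le_right l m) hmm' (hmem m' hm').1 hp hq hne hconst fun k hk =>
      hb k (hk.trans ((min_le_left l m).trans (hll'.le.trans (hmem l' hl').1))))

theorem inter_nonempty_of_abs_offset_cConst_le_one (hd : 1 ≤ d) (hN : 2 ≤ N)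
    (hK : S.IsAttractor K) (he : S.IsInfiniteWalk e) (hf : S.IsInfiniteWalk f)
    (hc : ∀ m, |S.offset e f (cConst n d) m| ≤ 1) :
    (K (S.src (e 0)) ∩ K (S.src (f 0))).Nonempty := by
  set c := cConst n d
  have hb : ∀ k ≤ c, ∀ m, |S.offset e f k m| ≤ 1 := fun k hk => abs_offset_le_one_of_le hN hc hk
  by_contra hKK
  have hcover : Finset.Iic c ⊆
      ((Finset.Iic c).filter fun l => S.offset e f l = 0) ∪
      ((Finset.Iic c).filter fun l => #(S.offsetSupport e f l) ∈ Finset.Ioo 0 d) ∪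
      ((Finset.Iic c).filter fun l => S.offsetSupport e f l = Finset.univ) := by
    intro l hl
    simp only [Finset.mem_union, mem_filter, hl, true_and, Finset.mem_Ioo]
    rcases Nat.eq_zero_or_pos #(S.offsetSupport e f l) with h0 | hpos
    · refine Or.inl (Or.inl (funext fun j => ?_))
      by_contra hj
      simpa [card_eq_zero.mp h0] using (show j ∈ S.offsetSupport e f l by simpa [offsetSupport])
    rcases (card_le_univ (S.offsetSupport e f l)).lt_or_eq with hlt | heq
    · exact Or.inl (Or.inr ⟨hpos, by simpa using hlt⟩)
    · exact Or.inr ((card_eq_iff_eq_univ _).mp heq)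
  have hcount := (Finset.card_le_card hcover).trans ((Finset.card_union_le _ _).trans
    (Nat.add_le_add_right (Finset.card_union_le _ _) _))
  have hZ := card_filter_offset_eq_zero_le hN hK he hf hb hKK
  have hM := card_filter_card_offsetSupport_mem_Ioo_le hN hK he hf hb hKK
  have hF := card_filter_offsetSupport_eq_univ_le hN hK he hf hb hKK
  rw [Nat.card_Iic] at hcount
  have hc_eq : c = (d - 1) * n ^ 2 + (n ^ 2 + n) / 2 + d - 1 := rfl
  have := Nat.choose_two_add_self n
  omega

end Counting

end CantorGDS

theorem intersect_iff_approx_intersect_general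
    {d N n : ℕ} (hd : 1 ≤ d) (hN : 2 ≤ N)
    (S : CantorGDS d N n) (K : Fin n → Set (Fin d → ℝ)) (hK : S.IsAttractor K)
    (i j : Fin n) :
    (K i ∩ K j).Nonempty ↔
      (CantorGDS.Q S (cConst n d) i ∩ CantorGDS.Q S (cConst n d) j).Nonempty := by
  refine ⟨fun ⟨x, hxi, hxj⟩ => ⟨x, CantorGDS.attractor_subset_Q hN hK _ i hxi,
    CantorGDS.attractor_subset_Q hN hK _ j hxj⟩, fun ⟨x, hxi, hxj⟩ => ?_⟩
  obtain ⟨e, he, rfl, ξ, hξ, rfl⟩ := CantorGDS.exists_isInfiniteWalk_of_mem_Q hxi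
  obtain ⟨f, hf, rfl, η, hη, hξη⟩ := CantorGDS.exists_isInfiniteWalk_of_mem_Q hxj
  exact CantorGDS.inter_nonempty_of_abs_offset_cConst_le_one hd hN hK he hf
    (CantorGDS.abs_offset_le_one_of_compWalk_eq (by omega) hξ hη hξη)

/-- **Theorem (finite criterion).** For a Cantor-type graph-directed attractor in `ℝ^d`
and distinct `i, j`, `K i ∩ K j ≠ ∅` iff the level-`c(n,d)` approximations
`Q_{i,c(n,d)}` and `Q_{j,c(n,d)}` intersect, where
`c(n,d) = (d-1)n² + (n²+n)/2 + d - 1`. -/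
theorem intersect_iff_approx_intersect
    {d N n : ℕ} (hd : 1 ≤ d) (hN : 2 ≤ N) (hn : 1 ≤ n)
    (S : CantorGDS d N n) (K : Fin n → Set (Fin d → ℝ)) (hK : S.IsAttractor K)
    (i j : Fin n) (hij : i ≠ j) :
    (K i ∩ K j).Nonempty ↔
      (CantorGDS.Q S (cConst n d) i ∩ CantorGDS.Q S (cConst n d) j).Nonempty :=
  intersect_iff_approx_intersect_general hd hN S K hK i j
end

section
/- Let P be a face of [0,1]^d and let φ(x) = N⁻¹(x + t), where N ≥ 2 is an integer and t ∈ {0,1,…,N−1}^d. Then for every subset E ⊆ [0,1]^d, one has P ∩ φ(E) ⊆ φ(E ∩ P). Furthermore, if P ∩ φ(E) is nonempty, then P ∩ φ(E) = φ(P ∩ E). -/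
open Set

/-- **Lemma.** Let `P` be a face of `[0,1]^d` and `φ(x) = N⁻¹(x + t)` with
`t ∈ {0,…,N-1}^d`. Then for every `E ⊆ [0,1]^d`, `P ∩ φ(E) ⊆ φ(E ∩ P)`; furthermore, if
`P ∩ φ(E)` is nonempty then `P ∩ φ(E) = φ(P ∩ E)`. -/
theorem face_inter_cmap_image
    {d N : ℕ} (hN : 2 ≤ N)
    (s : Finset (Fin d)) (a : Fin d → ℝ) (ha : ∀ m ∈ s, a m = 0 ∨ a m = 1)
    (t : Fin d → ℕ) (ht : ∀ m, t m < N)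
    (E : Set (Fin d → ℝ)) (hE : E ⊆ unitCube d) :
    face s a ∩ cmap N t '' E ⊆ cmap N t '' (E ∩ face s a) ∧
    ((face s a ∩ cmap N t '' E).Nonempty →
      face s a ∩ cmap N t '' E = cmap N t '' (face s a ∩ E)) := by
  have hNpos : (0:ℝ) < N := by
    have h : 0 < N := by omega
    exact_mod_cast h
  have key : ∀ x ∈ E, cmap N t x ∈ face s a →
      x ∈ face s a ∧ ∀ m ∈ s, a m + t m = N * a m := by
    intro x hxE hφ
    have hxcube := hE hxE
    have hcoord : ∀ m ∈ s, x m = a m ∧ a m + t m = N * a m := by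
      intro m hm
      have h1 : (x m + t m) / N = a m := hφ.2 m hm
      have h2 : x m + t m = N * a m := by
        field_simp at h1; linarith
      have hx0 := (hxcube m).1
      have hx1 := (hxcube m).2
      have ht0 : (0:ℝ) ≤ t m := by positivity
      have ht1 : (t m : ℝ) ≤ N - 1 := by
        have h3 : (t m : ℝ) + 1 ≤ N := by exact_mod_cast ht m
        linarith
      rcases ha m hm with h | h <;> rw [h] at h2 ⊢ <;> constructor <;> linarith
    exact ⟨⟨hxcube, fun m hm => (hcoord m hm).1⟩, fun m hm => (hcoord m hm).2⟩
  have sub1 : face s a ∩ cmap N t '' E ⊆ cmap N t '' (E ∩ face s a) := by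
    rintro y ⟨hyF, x, hxE, rfl⟩
    exact ⟨x, ⟨hxE, (key x hxE hyF).1⟩, rfl⟩
  refine ⟨sub1, ?_⟩
  rintro ⟨y, hyF, x, hxE, rfl⟩
  have hfix := (key x hxE hyF).2
  apply Subset.antisymm
  · intro z hz
    obtain ⟨w, hw, hwz⟩ := sub1 hz
    exact ⟨w, ⟨hw.2, hw.1⟩, hwz⟩
  · rintro z ⟨w, ⟨hwF, hwE⟩, rfl⟩
    refine ⟨⟨fun m => ?_, fun m hm => ?_⟩, w, hwE, rfl⟩
    · have h0 := (hwF.1 m).1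
      have h1 := (hwF.1 m).2
      have ht0 : (0:ℝ) ≤ t m := by positivity
      have ht1 : (t m : ℝ) ≤ N - 1 := by
        have h3 : (t m : ℝ) + 1 ≤ N := by exact_mod_cast ht m
        linarith
      simp only [cmap]
      constructor
      · positivity
      · rw [div_le_one hNpos]; show w m + (t m : ℝ) ≤ N; linarith
    · have := hfix m hm
      show (w m + t m) / N = a m
      rw [hwF.2 m hm]
      field_simp
      linarith
end

section
/- Let N ≥ 2 be an integer and let φ_1(x) = N⁻¹(x + t_1), …, φ_m(x) = N⁻¹(x + t_m) be contracting similarities of ℝ^d with t_1, …, t_m ∈ {0,1,…,N−1}^d. Let P be a face of [0,1]^d of dimension at least 1. If φ_i([0,1]^d) ∩ P ≠ ∅ for all 1 ≤ i ≤ m, then (φ_1 ∘ ⋯ ∘ φ_m([0,1]^d)) ∩ P = (φ_1 ∘ ⋯ ∘ φ_m(P)) ∩ P. -/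
open Set

/-! Each `φ_i` maps the cube into itself, and since its image meets `P`, in every direction
`k` fixed by `P` the digit `t_i k` is `0` (if `a k = 0`) or `N - 1` (if `a k = 1`). Then
`φ_i x` lies on the hyperplane `x_k = a k` only if `x` does, so `φ_i` maps `[0,1]^d \ P` into
itself, and so does the composition. Hence a point of the cube whose image lies in `P` already
lies in `P`. -/

theorem List.mapsTo_foldr_comp {α : Type*} {C : Set α} :
    ∀ {L : List (α → α)}, (∀ f ∈ L, MapsTo f C C) → MapsTo (L.foldr (· ∘ ·) id) C C
  | [], _ => mapsTo_id C
  | f :: _, hL =>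
    (hL f List.mem_cons_self).comp (List.mapsTo_foldr_comp fun g hg => hL g (.tail f hg))

theorem image_inter_eq_image_inter_of_mapsTo_diff {α : Type*} {f : α → α} {C P : Set α}
    (hPC : P ⊆ C) (hf : MapsTo f (C \ P) Pᶜ) : f '' C ∩ P = f '' P ∩ P := by
  refine Subset.antisymm ?_ (inter_subset_inter_left P (image_mono hPC))
  rintro _ ⟨⟨x, hxC, rfl⟩, hfx⟩
  by_cases hxP : x ∈ P
  · exact ⟨mem_image_of_mem f hxP, hfx⟩
  · exact absurd hfx (hf ⟨hxC, hxP⟩)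

theorem add_nat_div_mem_Icc {N t : ℕ} (ht : t < N) {x : ℝ} (hx : x ∈ Icc (0 : ℝ) 1) :
    (x + t) / N ∈ Icc (0 : ℝ) 1 := by
  have hN : (0 : ℝ) < N := by exact_mod_cast (Nat.zero_le t).trans_lt ht
  have ht' : (t : ℝ) + 1 ≤ N := by exact_mod_cast ht
  rw [mem_Icc, div_le_one hN]
  exact ⟨by have := hx.1; positivity, by linarith [hx.2]⟩

theorem eq_of_add_nat_div_eq_endpoint {N t : ℕ} (ht : t < N) {a x y : ℝ}
    (ha : a = 0 ∨ a = 1) (hy : y ∈ Icc (0 : ℝ) 1) (hya : (y + t) / N = a)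
    (hxa : (x + t) / N = a) : x = a := by
  have hN : (0 : ℝ) < N := by exact_mod_cast (Nat.zero_le t).trans_lt ht
  have ht' : (t : ℝ) + 1 ≤ N := by exact_mod_cast ht
  have ht0 : (0 : ℝ) ≤ t := t.cast_nonneg
  rw [div_eq_iff hN.ne'] at hya hxa
  rcases ha with rfl | rfl <;> linarith [hy.1, hy.2]

theorem cmap_mapsTo_unitCube {d N : ℕ} {t : Fin d → ℕ} (ht : ∀ k, t k < N) :
    MapsTo (cmap N t) (unitCube d) (unitCube d) :=
  fun _ hx k => add_nat_div_mem_Icc (ht k) (hx k)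

theorem cmap_mapsTo_unitCube_diff_face {d N : ℕ} {t : Fin d → ℕ} (ht : ∀ k, t k < N)
    {s : Finset (Fin d)} {a : Fin d → ℝ} (ha : ∀ k ∈ s, a k = 0 ∨ a k = 1)
    (hmeet : (cmap N t '' unitCube d ∩ face s a).Nonempty) :
    MapsTo (cmap N t) (unitCube d \ face s a) (unitCube d \ face s a) := by
  obtain ⟨_, ⟨y, hy, rfl⟩, -, hyP⟩ := hmeet
  rintro x ⟨hx, hxP⟩
  refine ⟨cmap_mapsTo_unitCube ht hx, fun hfx => hxP ⟨hx, fun k hk => ?_⟩⟩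
  exact eq_of_add_nat_div_eq_endpoint (ht k) (ha k hk) (hy k) (hyP k hk) (hfx.2 k hk)

theorem comp_image_inter_face_general
    {d N m : ℕ}
    (t : Fin m → Fin d → ℕ) (ht : ∀ i k, t i k < N)
    (s : Finset (Fin d)) (a : Fin d → ℝ) (ha : ∀ k ∈ s, a k = 0 ∨ a k = 1)
    (h : ∀ i : Fin m, (cmap N (t i) '' unitCube d ∩ face s a).Nonempty) :
    ((List.ofFn fun i : Fin m => cmap N (t i)).foldr (· ∘ ·) id '' unitCube d)
        ∩ face s a =
      ((List.ofFn fun i : Fin m => cmap N (t i)).foldr (· ∘ ·) id '' face s a)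
        ∩ face s a := by
  refine image_inter_eq_image_inter_of_mapsTo_diff (fun _ hx => hx.1) ?_
  refine (List.mapsTo_foldr_comp fun f hf => ?_).mono_right (sdiff_subset_compl _ _)
  obtain ⟨i, rfl⟩ := List.mem_ofFn.mp hf
  exact cmap_mapsTo_unitCube_diff_face (ht i) ha (h i)

/-- **Corollary.** Let `φ_1, …, φ_m` be maps `x ↦ N⁻¹(x + t_i)` with
`t_i ∈ {0,…,N-1}^d`, and let `P` be a face of `[0,1]^d` of dimension at least `1`. If
`φ_i([0,1]^d) ∩ P ≠ ∅` for all `i`, then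
`(φ_1 ∘ ⋯ ∘ φ_m)([0,1]^d) ∩ P = (φ_1 ∘ ⋯ ∘ φ_m)(P) ∩ P`. -/
theorem comp_image_inter_face
    {d N m : ℕ} (hN : 2 ≤ N) (hm : 1 ≤ m)
    (t : Fin m → Fin d → ℕ) (ht : ∀ i k, t i k < N)
    (s : Finset (Fin d)) (a : Fin d → ℝ) (ha : ∀ k ∈ s, a k = 0 ∨ a k = 1)
    (hdim : s.card < d)
    (h : ∀ i : Fin m, (cmap N (t i) '' unitCube d ∩ face s a).Nonempty) :
    ((List.ofFn fun i : Fin m => cmap N (t i)).foldr (· ∘ ·) id '' unitCube d)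
        ∩ face s a =
      ((List.ofFn fun i : Fin m => cmap N (t i)).foldr (· ∘ ·) id '' face s a)
        ∩ face s a :=
  comp_image_inter_face_general t ht s a ha h
end

section
/- Let (K_1,…,K_n) be a Cantor-type graph-directed attractor in ℝ^d with level-k approximations Q_{i,k}. Let P be a face of [0,1]^d of dimension at most d−1 and let i ∈ {1,…,n}. For every k ≥ 1, if P ∩ Q_{i,k} ≠ ∅, then there exists a walk of length k in the graph G_P which starts from i. -/
open Set

lemma phi_mem_cube {d N n : ℕ} (hN : 2 ≤ N) (S : CantorGDS d N n) (e : S.E)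
    {y : Fin d → ℝ} (hy : y ∈ unitCube d) : S.phi e y ∈ unitCube d := by
  intro m
  have h1 := (hy m).1
  have h2 := (hy m).2
  have ht : (S.t e m : ℝ) ≤ N - 1 := by
    have := S.t_lt e m
    have : (S.t e m : ℝ) + 1 ≤ N := by exact_mod_cast this
    linarith
  have hNpos : (0 : ℝ) < N := by positivity
  show (y m + S.t e m) / N ∈ Set.Icc (0:ℝ) 1
  constructor
  · apply div_nonneg _ hNpos.le
    have : (0:ℝ) ≤ (S.t e m : ℝ) := Nat.cast_nonneg _
    linarith
  · rw [div_le_one hNpos]; linarith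

lemma Q_subset_cube {d N n : ℕ} (hN : 2 ≤ N) (S : CantorGDS d N n) :
    ∀ k i, CantorGDS.Q S k i ⊆ unitCube d := by
  intro k
  induction k with
  | zero => intro i; exact Set.Subset.rfl
  | succ k ih =>
    intro i x hx
    simp only [CantorGDS.Q, Set.mem_iUnion] at hx
    obtain ⟨e, _, y, hy, rfl⟩ := hx
    exact phi_mem_cube hN S e (ih _ hy)

lemma face_preimage {d N n : ℕ} (hN : 2 ≤ N) (S : CantorGDS d N n)
    (s : Finset (Fin d)) (a : Fin d → ℝ) (ha : ∀ m ∈ s, a m = 0 ∨ a m = 1)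
    (e : S.E) {y : Fin d → ℝ} (hy : y ∈ unitCube d)
    (hP : S.phi e y ∈ face s a) : y ∈ face s a := by
  refine ⟨hy, fun m hm => ?_⟩
  have hNpos : (0 : ℝ) < N := by positivity
  have heq : (y m + S.t e m) / N = a m := hP.2 m hm
  have heq' : y m + S.t e m = a m * N := by
    field_simp at heq; linarith
  have h1 := (hy m).1
  have h2 := (hy m).2
  have ht0 : (0:ℝ) ≤ (S.t e m : ℝ) := Nat.cast_nonneg _
  have ht : (S.t e m : ℝ) ≤ N - 1 := by
    have := S.t_lt e m
    have : (S.t e m : ℝ) + 1 ≤ N := by exact_mod_cast this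
    linarith
  rcases ha m hm with h | h
  · rw [h] at heq' ⊢; linarith
  · rw [h] at heq' ⊢; linarith

/-- **Lemma.** Let `P` be a face of `[0,1]^d` of dimension at most `d-1` and `i` a vertex.
For every `k ≥ 1`, if `P ∩ Q_{i,k} ≠ ∅`, then there exists a walk of length `k` in the
graph `G_P` starting from `i`. -/
theorem face_inter_approx_imp_gpWalk
    {d N n : ℕ} (hd : 1 ≤ d) (hN : 2 ≤ N) (hn : 1 ≤ n)
    (S : CantorGDS d N n) (K : Fin n → Set (Fin d → ℝ)) (hK : S.IsAttractor K)
    (s : Finset (Fin d)) (a : Fin d → ℝ) (ha : ∀ m ∈ s, a m = 0 ∨ a m = 1)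
    (hs : s.Nonempty) (i : Fin n) (k : ℕ) (hk : 1 ≤ k)
    (hne : (face s a ∩ CantorGDS.Q S k i).Nonempty) :
    CantorGDS.GPWalk S (face s a) i k := by
  clear hk
  induction k generalizing i with
  | zero => exact ⟨fun _ => i, rfl, fun l hl => absurd hl (by omega)⟩
  | succ k ih =>
    obtain ⟨x, hxP, hxQ⟩ := hne
    simp only [CantorGDS.Q, Set.mem_iUnion] at hxQ
    obtain ⟨e, he, y, hy, rfl⟩ := hxQ
    have hycube : y ∈ unitCube d := Q_subset_cube hN S k _ hy
    have hyP : y ∈ face s a := face_preimage hN S s a ha e hycube hxP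
    obtain ⟨p', hp'0, hp'⟩ := ih (S.dst e) ⟨y, hyP, hy⟩
    refine ⟨fun l => if l = 0 then i else p' (l - 1), if_pos rfl, fun l hl => ?_⟩
    cases l with
    | zero =>
      simp only [if_pos rfl, if_neg (by omega : (1:ℕ) ≠ 0)]
      refine ⟨e, he, by simp [hp'0], ⟨S.phi e y, hxP, y, hycube, rfl⟩⟩
    | succ l =>
      simp only [if_neg (Nat.succ_ne_zero l), if_neg (by omega : l + 1 + 1 ≠ 0),
        Nat.add_sub_cancel]
      exact hp' l (by omega)
end

section
/- Let (K_1,…,K_n) be a Cantor-type graph-directed attractor in ℝ^d and let i, j ∈ {1,…,n} be distinct. If there exists a terminated finite walk in the associated intersecting graph that starts from (i,j), then K_i ∩ K_j ≠ ∅. -/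
open Set

/-- **Proposition.** If there exists a terminated finite walk in the associated
intersecting graph starting from `(i,j)` (with `i ≠ j`), then `K i ∩ K j ≠ ∅`. -/
theorem terminatedWalk_imp_intersect
    {d N n : ℕ} (hd : 1 ≤ d) (hN : 2 ≤ N) (hn : 1 ≤ n)
    (S : CantorGDS d N n) (K : Fin n → Set (Fin d → ℝ)) (hK : S.IsAttractor K)
    (i j : Fin n) (hij : i ≠ j) (hwalk : CantorGDS.TerminatedWalk S K i j) :
    (K i ∩ K j).Nonempty := by
  obtain ⟨hne, hcpt, heq⟩ := hK
  obtain ⟨m, p, q, hp0, hq0, hsolid, hterm⟩ := hwalk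
  have hsub : ∀ e : S.E, S.phi e '' K (S.dst e) ⊆ K (S.src e) := by
    intro e
    rw [heq (S.src e)]
    intro x hx
    exact Set.mem_iUnion.2 ⟨e, Set.mem_iUnion.2 ⟨rfl, hx⟩⟩
  have hbase : (K (p m) ∩ K (q m)).Nonempty := by
    obtain ⟨h1, e, e', hse, hde, hse', hde', hcase⟩ := hterm
    rcases hcase with ⟨ht, hij'⟩ | ⟨_, x, hx1, hx2⟩
    · obtain ⟨x, hx⟩ := hne (p (m + 1))
      refine ⟨S.phi e x, hse ▸ hsub e ⟨x, hde ▸ hx, rfl⟩, ?_⟩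
      have hphi : S.phi e x = S.phi e' x := by
        simp [CantorGDS.phi, cmap, ht]
      rw [hphi]
      exact hse' ▸ hsub e' ⟨x, by rw [hde', ← hij']; exact hx, rfl⟩
    · exact ⟨x, hse ▸ hsub e (hde ▸ hx1), hse' ▸ hsub e' (hde' ▸ hx2)⟩
  have hstep : ∀ a b i' j' : Fin n, CantorGDS.SolidEdge S a b i' j' →
      (K i' ∩ K j').Nonempty → (K a ∩ K b).Nonempty := by
    rintro a b i' j' ⟨-, e, e', hse, hde, hse', hde', ht⟩ ⟨x, hx1, hx2⟩
    refine ⟨S.phi e x, hse ▸ hsub e ⟨x, hde ▸ hx1, rfl⟩, ?_⟩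
    have hphi : S.phi e x = S.phi e' x := by
      simp [CantorGDS.phi, cmap, ht]
    rw [hphi]
    exact hse' ▸ hsub e' ⟨x, hde' ▸ hx2, rfl⟩
  have key : ∀ k, (K (p (m - k)) ∩ K (q (m - k))).Nonempty := by
    intro k
    induction k with
    | zero => simpa using hbase
    | succ k ih =>
      rcases Nat.lt_or_ge k m with hk | hk
      · have h1 : m - k = (m - (k + 1)) + 1 := by omega
        have h2 : m - (k + 1) < m := by omega
        exact hstep _ _ _ _ (h1 ▸ hsolid _ h2) (h1 ▸ ih)
      · have : m - (k + 1) = m - k := by omega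
        rw [this]; exact ih
  have := key m
  simpa [Nat.sub_self, hp0, hq0] using this
end
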